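/- Let the data (a_1,…,a_n) with labels (y_1,…,y_n) be separable with margin μ > 0, and let R := max_{i∈[n]} ‖a_i‖. Consider the Batch Perceptron iterates started from θ̂₀ = 0 (with the convention θ̂_{t+1} = θ̂_t when S_t = ∅). Then there exists an iteration index t with 1 ≤ t ≤ n R²/μ² such that S_t = ∅, i.e., y_i a_iᵀ θ̂_t > 0 for all i ∈ [n]; in other words, Batch Perceptron solves the classification task after at most n R²/μ² iterations. -/

import Mathlib

/-!
Novikoff's argument. Let `W` be the total mistake mass `∑ₜ |Sₜ| / n` accumulated in the first `T`
steps. Every misclassified point moves the iterate by at least `μ / n` in the direction of a unit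
separator `θ⋆`, so `⟪θ̂_{T+1}, θ⋆⟫ ≥ μ/2 + μ W`; on the other hand a batch update points away from
the current iterate, so it raises `‖θ̂‖²` by at most the square of its length, which gives
`‖θ̂_{T+1}‖² ≤ R²/4 + R² W`. Cauchy–Schwarz confines `W` to `W ≤ R²/μ² - 3/4`, and each step
with mistakes contributes at least `1/n` to `W`.
-/

open scoped RealInnerProductSpace
open Finset

theorem le_sq_div_sq_sub_of_sq_le {μ R W : ℝ} (hμ : 0 < μ) (hW : 0 ≤ W)
    (h : (μ / 2 + μ * W) ^ 2 ≤ R ^ 2 / 4 + R ^ 2 * W) : W ≤ R ^ 2 / μ ^ 2 - 3 / 4 := by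
  rw [le_sub_iff_add_le, le_div_iff₀ (by positivity)]
  by_contra! hlt
  -- otherwise `R² (W + 1/4) < μ² (W + 3/4) (W + 1/4) < μ² (W + 1/2)²`
  nlinarith [mul_lt_mul_of_pos_right hlt (by linarith : (0 : ℝ) < W + 1 / 4)]

namespace Perceptron

variable {E ι : Type*} [NormedAddCommGroup E] [InnerProductSpace ℝ E]
  {a : ι → E} {y : ι → ℝ} {μ R : ℝ} {θ : E}

theorem card_mul_le_inner_sum (hmargin : ∀ i, μ ≤ y i * ⟪a i, θ⟫) (s : Finset ι) :
    #s * μ ≤ ⟪∑ i ∈ s, y i • a i, θ⟫ := by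
  rw [sum_inner, ← nsmul_eq_mul]
  exact card_nsmul_le_sum _ _ _ fun i _ => by rw [real_inner_smul_left]; exact hmargin i

theorem norm_sum_le_card_mul (hy : ∀ i, |y i| ≤ 1) (hR : ∀ i, ‖a i‖ ≤ R) (s : Finset ι) :
    ‖∑ i ∈ s, y i • a i‖ ≤ #s * R := by
  rw [← nsmul_eq_mul]
  refine (norm_sum_le _ _).trans (sum_le_card_nsmul _ _ _ fun i _ => ?_)
  rw [norm_smul, Real.norm_eq_abs]
  exact (mul_le_of_le_one_left (norm_nonneg _) (hy i)).trans (hR i)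

theorem le_norm_of_margin (hy : ∀ i, |y i| ≤ 1) (hθ : ‖θ‖ ≤ 1)
    (hmargin : ∀ i, μ ≤ y i * ⟪a i, θ⟫) (i : ι) : μ ≤ ‖a i‖ :=
  calc μ ≤ y i * ⟪a i, θ⟫ := hmargin i
    _ ≤ |y i| * |⟪a i, θ⟫| := by rw [← abs_mul]; exact le_abs_self _
    _ ≤ 1 * (‖a i‖ * ‖θ‖) :=
      mul_le_mul (hy i) (abs_real_inner_le_norm _ _) (abs_nonneg _) zero_le_one
    _ ≤ ‖a i‖ := by rw [one_mul]; exact mul_le_of_le_one_right (norm_nonneg _) hθ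

variable [Fintype ι]

noncomputable def mistakes (a : ι → E) (y : ι → ℝ) (θ : E) : Finset ι :=
  {i | y i * ⟪a i, θ⟫ ≤ 0}

noncomputable def initialIterate (a : ι → E) (y : ι → ℝ) : E :=
  (1 / (2 * Fintype.card ι : ℝ)) • ∑ i, y i • a i

theorem mistakes_eq_empty_iff : mistakes a y θ = ∅ ↔ ∀ i, 0 < y i * ⟪a i, θ⟫ := by
  simp [mistakes, filter_eq_empty_iff]

theorem inner_sum_mistakes_nonpos (θ : E) : ⟪θ, ∑ i ∈ mistakes a y θ, y i • a i⟫ ≤ 0 := by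
  rw [inner_sum]
  refine sum_nonpos fun i hi => ?_
  rw [real_inner_smul_right, real_inner_comm]
  exact (mem_filter.1 hi).2

theorem half_le_inner_initialIterate [Nonempty ι] (hmargin : ∀ i, μ ≤ y i * ⟪a i, θ⟫) :
    μ / 2 ≤ ⟪initialIterate a y, θ⟫ := by
  have hN : (0 : ℝ) < Fintype.card ι := by exact_mod_cast Fintype.card_pos
  have := card_mul_le_inner_sum hmargin univ
  rw [card_univ] at this
  rw [initialIterate, real_inner_smul_left, div_mul_eq_mul_div, one_mul,
    div_le_div_iff₀ two_pos (by positivity)]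
  nlinarith

theorem norm_initialIterate_le [Nonempty ι] (hy : ∀ i, |y i| ≤ 1) (hR : ∀ i, ‖a i‖ ≤ R) :
    ‖initialIterate a y‖ ≤ R / 2 := by
  have hN : (0 : ℝ) < Fintype.card ι := by exact_mod_cast Fintype.card_pos
  have := norm_sum_le_card_mul hy hR univ
  rw [card_univ] at this
  rw [initialIterate, norm_smul, Real.norm_of_nonneg (by positivity), div_mul_eq_mul_div,
    one_mul, div_le_div_iff₀ (by positivity) two_pos]
  nlinarith

theorem mistakes_initialIterate_eq_empty [Subsingleton ι] (hμ : 0 < μ)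
    (hmargin : ∀ i, μ ≤ y i * ⟪a i, θ⟫) : mistakes a y (initialIterate a y) = ∅ := by
  refine mistakes_eq_empty_iff.2 fun i => ?_
  have : Nonempty ι := ⟨i⟩
  have hN : (0 : ℝ) < Fintype.card ι := by exact_mod_cast Fintype.card_pos
  have hya : 0 < ‖y i • a i‖ := norm_pos_iff.2 fun h => by
    have := hmargin i
    rw [← real_inner_smul_left, h, inner_zero_left] at this
    linarith
  rw [initialIterate, Fintype.sum_subsingleton _ i, ← real_inner_smul_left,
    real_inner_smul_right, real_inner_self_eq_norm_sq]
  positivity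

theorem le_inner_iterate {u : ℕ → E} {η : ℝ} (hη : 0 ≤ η)
    (hu : ∀ t, u (t + 1) = u t + η • ∑ i ∈ mistakes a y (u t), y i • a i)
    (hmargin : ∀ i, μ ≤ y i * ⟪a i, θ⟫) (T : ℕ) :
    ⟪u 0, θ⟫ + η * μ * ∑ t ∈ range T, (#(mistakes a y (u t)) : ℝ) ≤ ⟪u T, θ⟫ := by
  induction T with
  | zero => simp
  | succ T ih =>
    have := mul_le_mul_of_nonneg_left (card_mul_le_inner_sum hmargin (mistakes a y (u T))) hη
    rw [sum_range_succ, hu, inner_add_left, real_inner_smul_left]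
    linarith

theorem norm_iterate_sq_le {u : ℕ → E} {η : ℝ} (hη : 0 ≤ η)
    (hu : ∀ t, u (t + 1) = u t + η • ∑ i ∈ mistakes a y (u t), y i • a i)
    (hy : ∀ i, |y i| ≤ 1) (hR : ∀ i, ‖a i‖ ≤ R) (T : ℕ) :
    ‖u T‖ ^ 2 ≤ ‖u 0‖ ^ 2 + (η * R) ^ 2 * ∑ t ∈ range T, (#(mistakes a y (u t)) : ℝ) ^ 2 := by
  induction T with
  | zero => simp
  | succ T ih =>
    have hcross :=
      mul_nonpos_of_nonneg_of_nonpos hη (inner_sum_mistakes_nonpos (a := a) (y := y) (u T))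
    have hstep :
        ‖η • ∑ i ∈ mistakes a y (u T), y i • a i‖ ≤ η * (#(mistakes a y (u T)) * R) := by
      rw [norm_smul, Real.norm_of_nonneg hη]
      exact mul_le_mul_of_nonneg_left (norm_sum_le_card_mul hy hR _) hη
    have hstep_sq := pow_le_pow_left₀ (norm_nonneg _) hstep 2
    rw [sum_range_succ, hu, norm_add_sq_real, real_inner_smul_right]
    nlinarith

section Batch

variable [Nonempty ι] {u : ℕ → E}

theorem sum_card_mistakes_le (hμ : 0 < μ) (hθ : ‖θ‖ ≤ 1)
    (hmargin : ∀ i, μ ≤ y i * ⟪a i, θ⟫) (hy : ∀ i, |y i| ≤ 1) (hR : ∀ i, ‖a i‖ ≤ R)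
    (hu0 : u 0 = initialIterate a y)
    (hu : ∀ t, u (t + 1) = u t + (1 / (Fintype.card ι : ℝ)) •
      ∑ i ∈ mistakes a y (u t), y i • a i) (T : ℕ) :
    ∑ t ∈ range T, (#(mistakes a y (u t)) : ℝ) ≤ Fintype.card ι * (R ^ 2 / μ ^ 2 - 3 / 4) := by
  have hN : (0 : ℝ) < Fintype.card ι := by exact_mod_cast Fintype.card_pos
  have hinner := le_inner_iterate (by positivity) hu hmargin T
  have hnorm := norm_iterate_sq_le (by positivity) hu hy hR T
  have hsq : ∑ t ∈ range T, (#(mistakes a y (u t)) : ℝ) ^ 2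
      ≤ Fintype.card ι * ∑ t ∈ range T, (#(mistakes a y (u t)) : ℝ) := by
    rw [mul_sum]
    refine sum_le_sum fun t _ => ?_
    rw [sq]
    exact mul_le_mul_of_nonneg_right (by exact_mod_cast card_le_univ _) (Nat.cast_nonneg _)
  have h0_inner := half_le_inner_initialIterate (a := a) hmargin
  have h0_norm := pow_le_pow_left₀ (norm_nonneg _) (norm_initialIterate_le hy hR) 2
  rw [← hu0] at h0_inner h0_norm
  have hM : 0 ≤ ∑ t ∈ range T, (#(mistakes a y (u t)) : ℝ) := by positivity
  generalize (Fintype.card ι : ℝ) = N at hN hinner hnorm hsq ⊢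
  generalize ∑ t ∈ range T, (#(mistakes a y (u t)) : ℝ) = M at hinner hnorm hsq hM ⊢
  have hlower : μ / 2 + μ * (M / N) ≤ ‖u T‖ :=
    calc μ / 2 + μ * (M / N) ≤ ⟪u T, θ⟫ := by
          have : 1 / N * μ * M = μ * (M / N) := by ring
          linarith
      _ ≤ ‖u T‖ * ‖θ‖ := real_inner_le_norm _ _
      _ ≤ ‖u T‖ := mul_le_of_le_one_right (norm_nonneg _) hθ
  have hupper : ‖u T‖ ^ 2 ≤ R ^ 2 / 4 + R ^ 2 * (M / N) := by
    have : (1 / N * R) ^ 2 * (N * M) = R ^ 2 * (M / N) := by field_simp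
    nlinarith [mul_le_mul_of_nonneg_left hsq (sq_nonneg (1 / N * R))]
  have hW := le_sq_div_sq_sub_of_sq_le hμ (by positivity)
    ((pow_le_pow_left₀ (by positivity) hlower 2).trans hupper)
  calc M = N * (M / N) := by field_simp
    _ ≤ N * (R ^ 2 / μ ^ 2 - 3 / 4) := mul_le_mul_of_nonneg_left hW hN.le

theorem exists_mistakes_eq_empty (hμ : 0 < μ) (hθ : ‖θ‖ ≤ 1)
    (hmargin : ∀ i, μ ≤ y i * ⟪a i, θ⟫) (hy : ∀ i, |y i| ≤ 1) (hR : ∀ i, ‖a i‖ ≤ R)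
    (hu0 : u 0 = initialIterate a y)
    (hu : ∀ t, u (t + 1) = u t + (1 / (Fintype.card ι : ℝ)) •
      ∑ i ∈ mistakes a y (u t), y i • a i) :
    ∃ T : ℕ, (T : ℝ) ≤ Fintype.card ι * (R ^ 2 / μ ^ 2 - 3 / 4) ∧ mistakes a y (u T) = ∅ := by
  classical
  have hbound : ∀ T, (∀ t < T, (mistakes a y (u t)).Nonempty) →
      (T : ℝ) ≤ Fintype.card ι * (R ^ 2 / μ ^ 2 - 3 / 4) := fun T hT =>
    calc (T : ℝ) = ∑ t ∈ range T, (1 : ℝ) := by simp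
      _ ≤ ∑ t ∈ range T, (#(mistakes a y (u t)) : ℝ) := sum_le_sum fun t ht => by
          exact_mod_cast card_pos.2 (hT t (mem_range.1 ht))
      _ ≤ _ := sum_card_mistakes_le hμ hθ hmargin hy hR hu0 hu T
  have hex : ∃ T, mistakes a y (u T) = ∅ := by
    by_contra! h
    obtain ⟨T, hT⟩ := exists_nat_gt (Fintype.card ι * (R ^ 2 / μ ^ 2 - 3 / 4))
    exact hT.not_ge (hbound T fun t _ => h t)
  exact ⟨Nat.find hex, hbound _ fun t ht => nonempty_iff_ne_empty.2 (Nat.find_min hex ht),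
    Nat.find_spec hex⟩

end Batch

end Perceptron

open Perceptron in
theorem batch_perceptron_converges {d n : ℕ} (hn : 0 < n)
    (a : Fin n → EuclideanSpace ℝ (Fin d)) (y : Fin n → ℝ)
    (hy : ∀ i, y i = 1 ∨ y i = -1)
    (μ R : ℝ) (hμ : 0 < μ)
    (θstar : EuclideanSpace ℝ (Fin d)) (hstar : ‖θstar‖ = 1)
    (hmargin : ∀ i, μ ≤ y i * ⟪a i, θstar⟫)
    (hR : IsGreatest (Set.range fun i => ‖a i‖) R)
    (θhat : ℕ → EuclideanSpace ℝ (Fin d))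
    (h0 : θhat 0 = 0)
    (h1 : θhat 1 = θhat 0 + ((1 : ℝ) / (2 * n)) • ∑ i, y i • a i)
    (hstep : ∀ t, 1 ≤ t →
      θhat (t + 1) = θhat t + ((1 : ℝ) / n) •
        ∑ i ∈ Finset.univ.filter (fun i => y i * ⟪a i, θhat t⟫ ≤ 0), y i • a i) :
    ∃ t : ℕ, 1 ≤ t ∧ (t : ℝ) ≤ n * R ^ 2 / μ ^ 2 ∧
      ∀ i, 0 < y i * ⟪a i, θhat t⟫ := by
  have hy' : ∀ i, |y i| ≤ 1 := fun i => by rcases hy i with h | h <;> simp [h]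
  have hRa : ∀ i, ‖a i‖ ≤ R := fun i => hR.2 ⟨i, rfl⟩
  have hθ1 : θhat 1 = initialIterate a y := by
    rw [h1, h0, zero_add, initialIterate, Fintype.card_fin]
  rcases Nat.lt_or_ge n 2 with hn1 | hn2
  -- for `n = 1` the bound `T ≤ n (R²/μ² - 3/4)` is too weak by `1/4`, but `θ̂₁` already classifies
  · obtain rfl : n = 1 := by omega
    have hμR : μ ≤ R := (le_norm_of_margin hy' hstar.le hmargin 0).trans (hRa 0)
    refine ⟨1, le_rfl, ?_, mistakes_eq_empty_iff.1 ?_⟩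
    · rw [Nat.cast_one, one_mul, le_div_iff₀ (by positivity), one_mul]
      exact pow_le_pow_left₀ hμ.le hμR 2
    · rw [hθ1]
      exact mistakes_initialIterate_eq_empty hμ hmargin
  · have : Nonempty (Fin n) := ⟨⟨0, hn⟩⟩
    obtain ⟨T, hT, hempty⟩ := exists_mistakes_eq_empty (u := fun t => θhat (t + 1))
      hμ hstar.le hmargin hy' hRa hθ1
      (fun t => by rw [Fintype.card_fin]; exact hstep (t + 1) (by omega))
    refine ⟨T + 1, by omega, ?_, mistakes_eq_empty_iff.1 hempty⟩
    have hn2' : (2 : ℝ) ≤ n := by exact_mod_cast hn2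
    rw [Fintype.card_fin] at hT
    rw [mul_div_assoc]
    push_cast
    linarith
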